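/- arXiv:1812.03713 — 7 statements merged into one kernel-verified Lean document; each statement's English description precedes it below -/
import Mathlib

section
/- Let D be an integral domain and let I be an integral t-ideal of D (i.e., I = I^t). If P is a prime ideal of D minimal over I (minimal among the prime ideals containing I), then P is a t-ideal of D. -/
/-!
Localizing at `P`, the radical of `I D_P` is `P D_P`, so for every finitely generated ideal
`J ⊆ P` there are `n` and `c ∉ P` with `c J^n ⊆ I`. The `v`-operation is submultiplicative,
`A^v B^v ⊆ (AB)^v`, hence for `x ∈ J^v ⊆ D` we get `c x^n ∈ (c J^n)^v ⊆ I^t = I ⊆ P`, and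
primality of `P` gives `x ∈ P`. Thus `J^v ⊆ P` for all such `J`, i.e. `P` is a `t`-ideal.
-/

open scoped nonZeroDivisors

/-- The `t`-closure of a fractional ideal `E` of an integral domain `D`:
the union (here: supremum, which is a directed union) of `F^v = (F⁻¹)⁻¹` over all
nonzero finitely generated fractional subideals `F` of `E`, viewed as a
`D`-submodule of the fraction field of `D`. -/
noncomputable def tClos (D : Type*) [CommRing D] [IsDomain D]
    (E : FractionalIdeal D⁰ (FractionRing D)) : Submodule D (FractionRing D) :=
  ⨆ F ∈ {F : FractionalIdeal D⁰ (FractionRing D) |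
      F ≠ 0 ∧ F ≤ E ∧ (F : Submodule D (FractionRing D)).FG},
    (((F⁻¹)⁻¹ : FractionalIdeal D⁰ (FractionRing D)) : Submodule D (FractionRing D))

/-- An integral ideal `I` of an integral domain `D` is a `t`-ideal if `I = I^t`. -/
def Ideal.IsT {D : Type*} [CommRing D] [IsDomain D] (I : Ideal D) : Prop :=
  ((I : FractionalIdeal D⁰ (FractionRing D)) : Submodule D (FractionRing D)) = tClos D I

namespace FractionalIdeal

variable {R K : Type*} [CommRing R] [IsDomain R] [Field K] [Algebra R K] [IsFractionRing R K]

instance : NoZeroDivisors (FractionalIdeal R⁰ K) where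
  eq_zero_or_eq_zero_of_mul_eq_zero {I J} hIJ := by
    contrapose! hIJ
    simp only [ne_eq, eq_zero_iff, not_forall] at hIJ ⊢
    obtain ⟨⟨x, hxI, hx0⟩, ⟨y, hyJ, hy0⟩⟩ := hIJ
    exact ⟨x * y, mul_mem_mul hxI hyJ, mul_ne_zero hx0 hy0⟩

theorem inv_ne_zero_of_ne_zero {I : FractionalIdeal R⁰ K} (hI : I ≠ 0) : I⁻¹ ≠ 0 := by
  rintro h
  simpa [h] using bot_lt_mul_inv hI

theorem le_inv_iff_mul_le_one {I J : FractionalIdeal R⁰ K} (hJ : J ≠ 0) :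
    I ≤ J⁻¹ ↔ I * J ≤ 1 :=
  le_div_iff_mul_le hJ

theorem mul_inv_le_one (I : FractionalIdeal R⁰ K) : I * I⁻¹ ≤ 1 :=
  mul_one_div_le_one

theorem le_inv_inv (I : FractionalIdeal R⁰ K) : I ≤ I⁻¹⁻¹ := by
  rcases eq_or_ne I 0 with rfl | hI
  · exact zero_le _
  · rw [le_inv_iff_mul_le_one (inv_ne_zero_of_ne_zero hI)]
    exact mul_inv_le_one I

theorem inv_inv_le_one {I : FractionalIdeal R⁰ K} (hI : I ≤ 1) : I⁻¹⁻¹ ≤ 1 := by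
  rcases eq_or_ne I 0 with rfl | hI0
  · simp [inv_zero']
  · have : 1 ≤ I⁻¹ := (le_inv_iff_mul_le_one hI0).mpr (by rwa [one_mul])
    simpa using
      inv_anti_mono (one_ne_zero' (FractionalIdeal R⁰ K)) (inv_ne_zero_of_ne_zero hI0) this

theorem inv_inv_mul_inv_inv_le (I J : FractionalIdeal R⁰ K) :
    I⁻¹⁻¹ * J⁻¹⁻¹ ≤ (I * J)⁻¹⁻¹ := by
  rcases eq_or_ne I 0 with rfl | hI
  · simp [inv_zero']
  rcases eq_or_ne J 0 with rfl | hJ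
  · simp [inv_zero']
  have hIJ : (I * J)⁻¹ ≠ 0 := inv_ne_zero_of_ne_zero (mul_ne_zero hI hJ)
  have h₁ : J * (I * J)⁻¹ ≤ I⁻¹ := by
    rw [le_inv_iff_mul_le_one hI]
    calc J * (I * J)⁻¹ * I = I * J * (I * J)⁻¹ := by ring
      _ ≤ 1 := mul_inv_le_one _
  have h₂ : I⁻¹⁻¹ * (I * J)⁻¹ ≤ J⁻¹ := by
    rw [le_inv_iff_mul_le_one hJ]
    calc I⁻¹⁻¹ * (I * J)⁻¹ * J = I⁻¹⁻¹ * (J * (I * J)⁻¹) := by ring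
      _ ≤ I⁻¹⁻¹ * I⁻¹ := by gcongr
      _ ≤ 1 := by rw [mul_comm]; exact mul_inv_le_one _
  rw [le_inv_iff_mul_le_one hIJ]
  calc I⁻¹⁻¹ * J⁻¹⁻¹ * (I * J)⁻¹ = I⁻¹⁻¹ * (I * J)⁻¹ * J⁻¹⁻¹ := by ring
    _ ≤ J⁻¹ * J⁻¹⁻¹ := by gcongr
    _ ≤ 1 := mul_inv_le_one _

theorem inv_inv_pow_le (I : FractionalIdeal R⁰ K) (n : ℕ) : I⁻¹⁻¹ ^ n ≤ (I ^ n)⁻¹⁻¹ := by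
  induction n with
  | zero => simp
  | succ n ih =>
    calc I⁻¹⁻¹ ^ (n + 1) = I⁻¹⁻¹ ^ n * I⁻¹⁻¹ := pow_succ _ _
      _ ≤ (I ^ n)⁻¹⁻¹ * I⁻¹⁻¹ := by gcongr
      _ ≤ (I ^ (n + 1))⁻¹⁻¹ := by rw [pow_succ]; exact inv_inv_mul_inv_inv_le _ _

end FractionalIdeal

theorem IsLocalization.exists_mul_mem_of_map_le {R S : Type*} [CommRing R] [CommRing S]
    [Algebra R S] (M : Submonoid R) [IsLocalization M S] {I J : Ideal R} (hJ : J.FG)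
    (hJI : J.map (algebraMap R S) ≤ I.map (algebraMap R S)) :
    ∃ m ∈ M, ∀ x ∈ J, m * x ∈ I := by
  induction J, hJ using Submodule.fg_induction with
  | singleton x =>
    have hx : algebraMap R S x ∈ I.map (algebraMap R S) :=
      hJI (Ideal.mem_map_of_mem _ (Submodule.mem_span_singleton_self x))
    obtain ⟨m, hm, hmx⟩ := (algebraMap_mem_map_algebraMap_iff (S := S) M I x).mp hx
    refine ⟨m, hm, fun y hy => ?_⟩
    obtain ⟨r, rfl⟩ := Submodule.mem_span_singleton.mp hy
    simpa [smul_eq_mul, mul_left_comm] using I.mul_mem_left r hmx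
  | sup J₁ J₂ _ _ ih₁ ih₂ =>
    rw [Ideal.map_sup, sup_le_iff] at hJI
    obtain ⟨m₁, hm₁, h₁⟩ := ih₁ hJI.1
    obtain ⟨m₂, hm₂, h₂⟩ := ih₂ hJI.2
    refine ⟨m₁ * m₂, M.mul_mem hm₁ hm₂, fun x hx => ?_⟩
    obtain ⟨y, hy, z, hz, rfl⟩ := Submodule.mem_sup.mp hx
    rw [mul_add]
    exact I.add_mem (by simpa [mul_right_comm] using I.mul_mem_right m₂ (h₁ y hy))
      (by simpa [mul_assoc] using I.mul_mem_left m₁ (h₂ z hz))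

theorem Ideal.exists_span_singleton_mul_pow_le_of_mem_minimalPrimes {R : Type*} [CommRing R]
    {I P J : Ideal R} (hP : P ∈ I.minimalPrimes) (hJ : J.FG) (hJP : J ≤ P) :
    ∃ n : ℕ, ∃ c ∉ P, span {c} * J ^ n ≤ I := by
  have := hP.isPrime
  let A := Localization.AtPrime P
  have hJrad : J.map (algebraMap R A) ≤ (I.map (algebraMap R A)).radical := by
    rw [IsLocalization.AtPrime.radical_map_of_mem_minimalPrimes A P I hP]
    exact map_mono hJP
  obtain ⟨n, hn⟩ := exists_pow_le_of_le_radical_of_fg hJrad (hJ.map _)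
  rw [← Ideal.map_pow] at hn
  obtain ⟨c, hc, hcJ⟩ :=
    IsLocalization.exists_mul_mem_of_map_le P.primeCompl (S := A) (Submodule.FG.pow hJ n) hn
  exact ⟨n, c, hc, span_singleton_mul_le_iff.mpr hcJ⟩

open FractionalIdeal

section TClosure

variable {D : Type*} [CommRing D] [IsDomain D]

theorem coe_inv_inv_le_tClos {E F : FractionalIdeal D⁰ (FractionRing D)} (hF0 : F ≠ 0) (hFE : F ≤ E)
    (hF : (F : Submodule D (FractionRing D)).FG) :
    ((F⁻¹⁻¹ : FractionalIdeal D⁰ (FractionRing D)) : Submodule D (FractionRing D)) ≤ tClos D E :=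
  le_iSup₂_of_le F ⟨hF0, hFE, hF⟩ le_rfl

theorem le_tClos (E : FractionalIdeal D⁰ (FractionRing D)) :
    (E : Submodule D (FractionRing D)) ≤ tClos D E := by
  intro x hx
  rcases eq_or_ne x 0 with rfl | hx0
  · exact zero_mem _
  have hxE : spanSingleton D⁰ x ≤ E := spanSingleton_le_iff_mem.mpr hx
  have hxF : (spanSingleton D⁰ x : Submodule D (FractionRing D)).FG := by
    rw [coe_spanSingleton]; exact Submodule.fg_span_singleton x
  exact coe_inv_inv_le_tClos (spanSingleton_ne_zero_iff.mpr hx0) hxE hxF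
    (le_inv_inv _ (mem_spanSingleton_self D⁰ x))

theorem Ideal.isT_iff {I : Ideal D} :
    I.IsT ↔ ∀ F : FractionalIdeal D⁰ (FractionRing D), F ≠ 0 → F ≤ I →
      (F : Submodule D (FractionRing D)).FG → F⁻¹⁻¹ ≤ I := by
  refine ⟨fun hI F hF0 hFI hF => ?_, fun h => le_antisymm (le_tClos _) ?_⟩
  · rw [← coe_le_coe]
    exact (coe_inv_inv_le_tClos hF0 hFI hF).trans (Eq.symm hI).le
  · exact iSup₂_le fun F ⟨hF0, hFI, hF⟩ => coe_le_coe.mpr (h F hF0 hFI hF)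

end TClosure

theorem Ideal.coeIdeal_inv_inv_le_of_mem_minimalPrimes {D : Type*} [CommRing D] [IsDomain D]
    {I P J : Ideal D} (hI : I.IsT) (hP : P ∈ I.minimalPrimes) (hJ : J.FG) (hJP : J ≤ P)
    (hJ0 : J ≠ ⊥) :
    (J : FractionalIdeal D⁰ (FractionRing D))⁻¹⁻¹ ≤ P := by
  intro x hx
  obtain ⟨n, c, hcP, hcI⟩ := exists_span_singleton_mul_pow_le_of_mem_minimalPrimes hP hJ hJP
  obtain ⟨d, rfl⟩ := (mem_one_iff D⁰).mp (inv_inv_le_one coeIdeal_le_one hx)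
  have hc0 : c ≠ 0 := fun hc => hcP (hc ▸ P.zero_mem)
  have hGI : ((span {c} * J ^ n : Ideal D) : FractionalIdeal D⁰ (FractionRing D))⁻¹⁻¹ ≤ I := by
    refine isT_iff.mp hI _ ?_ ((coeIdeal_le_coeIdeal _).mpr hcI) ?_
    · exact coeIdeal_ne_zero.mpr
        (mul_ne_zero (span_singleton_eq_bot.not.mpr hc0) (pow_ne_zero n hJ0))
    · exact (coeIdeal_fg _ (IsFractionRing.injective D _) _).mpr
        ((Submodule.fg_span_singleton c).mul (Submodule.FG.pow hJ n))
  have hcd : algebraMap D (FractionRing D) (c * d ^ n) ∈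
      ((span {c} * J ^ n : Ideal D) : FractionalIdeal D⁰ (FractionRing D))⁻¹⁻¹ := by
    rw [coeIdeal_mul, coeIdeal_pow, map_mul, map_pow]
    refine inv_inv_mul_inv_inv_le _ _
      (FractionalIdeal.mul_mem_mul (le_inv_inv _ ?_) (inv_inv_pow_le _ n ?_))
    · exact mem_coeIdeal_of_mem D⁰ (mem_span_singleton_self c)
    · rw [← mem_coe, coe_pow]
      exact Submodule.pow_mem_pow _ hx n
  have hcdI : c * d ^ n ∈ I := by
    rw [← span_singleton_le_iff_mem, ← coeIdeal_le_coeIdeal (FractionRing D),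
      coeIdeal_span_singleton, spanSingleton_le_iff_mem]
    exact hGI hcd
  have hdP : d ∈ P :=
    hP.isPrime.mem_of_pow_mem n ((hP.isPrime.mem_or_mem (hP.le hcdI)).resolve_left hcP)
  exact mem_coeIdeal_of_mem D⁰ hdP

theorem t_ideal_of_minimal_prime_over_t_ideal_general {D : Type*} [CommRing D] [IsDomain D]
    (I : Ideal D) (hIt : I.IsT)
    (P : Ideal D) (hP : P ∈ I.minimalPrimes) : P.IsT := by
  rw [Ideal.isT_iff]
  intro F hF0 hFP hF
  obtain ⟨J, rfl⟩ := le_one_iff_exists_coeIdeal.mp (hFP.trans coeIdeal_le_one)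
  exact Ideal.coeIdeal_inv_inv_le_of_mem_minimalPrimes hIt hP
    ((coeIdeal_fg _ (IsFractionRing.injective D _) J).mp hF)
    ((coeIdeal_le_coeIdeal _).mp hFP) (coeIdeal_ne_zero.mp hF0)

/-- If `P` is a prime ideal of an integral domain `D` minimal over an integral
`t`-ideal `I` of `D`, then `P` is a `t`-ideal of `D`. -/
theorem t_ideal_of_minimal_prime_over_t_ideal {D : Type*} [CommRing D] [IsDomain D]
    (I : Ideal D) (hI0 : I ≠ ⊥) (hIt : I.IsT)
    (P : Ideal D) (hP : P ∈ I.minimalPrimes) : P.IsT :=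
  t_ideal_of_minimal_prime_over_t_ideal_general I hIt P hP
end

section
/- Let (D, M) be a local integral domain whose prime ideals are pairwise comparable, i.e., Spec(D) is linearly ordered under inclusion. Then D is a t-local domain; moreover, every nonzero prime ideal of D is a t-ideal. -/
open scoped nonZeroDivisors

set_option linter.unusedSectionVars false

section Aux
variable {D : Type*} [CommRing D] [IsDomain D]

/-- In a ring with linearly ordered prime spectrum, the radical of a proper ideal is prime. -/
theorem radical_isPrime_of_lin
    (hlin : ∀ P Q : Ideal D, P.IsPrime → Q.IsPrime → P ≤ Q ∨ Q ≤ P)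
    {J : Ideal D} (hJ : J ≠ ⊤) : J.radical.IsPrime := by
  obtain ⟨M, hM, hJM⟩ := J.exists_le_maximal hJ
  have hradM : J.radical ≤ M := hM.isPrime.radical_le_iff.2 hJM
  constructor
  · intro h
    exact hM.ne_top (top_le_iff.mp (h ▸ hradM))
  · intro x y hxy
    by_contra hc
    push_neg at hc
    obtain ⟨hx, hy⟩ := hc
    rw [Ideal.radical_eq_sInf] at hx hy hxy
    simp only [Submodule.mem_sInf, not_forall] at hx hy
    obtain ⟨P₁, hP₁, hxP₁⟩ := hx
    obtain ⟨P₂, hP₂, hyP₂⟩ := hy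
    simp only [Set.mem_setOf_eq] at hP₁ hP₂
    rcases hlin P₁ P₂ hP₁.2 hP₂.2 with h12 | h21
    · have : x * y ∈ P₁ := Submodule.mem_sInf.mp hxy P₁ (by simp [hP₁])
      rcases hP₁.2.mem_or_mem this with h | h
      · exact hxP₁ h
      · exact hyP₂ (h12 h)
    · have : x * y ∈ P₂ := Submodule.mem_sInf.mp hxy P₂ (by simp [hP₂])
      rcases hP₂.2.mem_or_mem this with h | h
      · exact hxP₁ (h21 h)
      · exact hyP₂ h

/-- Among the generators of a nonzero finitely generated ideal contained in a prime,
there is one whose radical dominates all the others. -/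
theorem exists_dominant_generator
    (hlin : ∀ P Q : Ideal D, P.IsPrime → Q.IsPrime → P ≤ Q ∨ Q ≤ P)
    {P : Ideal D} (hP : P.IsPrime) :
    ∀ s : Finset D, ↑s ⊆ (P : Set D) → Ideal.span (s : Set D) ≠ ⊥ →
      ∃ a ∈ s, a ≠ 0 ∧ Ideal.span (s : Set D) ≤ (Ideal.span {a}).radical := by
  classical
  intro s
  induction s using Finset.induction_on with
  | empty => intro _ h; simp [Ideal.span_empty] at h
  | @insert b s' hb ih =>
    intro hsub hne
    have hbP : b ∈ P := hsub (by simp)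
    have hs'P : ↑s' ⊆ (P : Set D) := fun x hx => hsub (by simp [hx])
    by_cases hz : Ideal.span (s' : Set D) = ⊥
    · have hb0 : b ≠ 0 := by
        rintro rfl
        apply hne
        rw [Finset.coe_insert, Ideal.span_insert, hz]
        simp
      refine ⟨b, by simp, hb0, ?_⟩
      rw [Finset.coe_insert, Ideal.span_insert, hz, sup_bot_eq]
      exact Ideal.le_radical
    · obtain ⟨a', ha's, ha'0, hle⟩ := ih hs'P hz
      have ha'P : a' ∈ P := hs'P ha's
      have hQ' : (Ideal.span {a'}).radical.IsPrime :=
        radical_isPrime_of_lin hlin (fun h => hP.ne_top (top_le_iff.mp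
          (h ▸ (Ideal.span_le.mpr (Set.singleton_subset_iff.mpr ha'P)))))
      have hQb : (Ideal.span {b}).radical.IsPrime :=
        radical_isPrime_of_lin hlin (fun h => hP.ne_top (top_le_iff.mp
          (h ▸ (Ideal.span_le.mpr (Set.singleton_subset_iff.mpr hbP)))))
      rcases hlin _ _ hQb hQ' with h1 | h2
      · refine ⟨a', by simp [ha's], ha'0, ?_⟩
        rw [Finset.coe_insert, Ideal.span_insert]
        refine sup_le ?_ hle
        refine (Ideal.span_le.mpr (Set.singleton_subset_iff.mpr ?_))
        exact h1 (Ideal.le_radical (Ideal.subset_span rfl))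
      · have hb0 : b ≠ 0 := by
          rintro rfl
          have : a' ∈ (Ideal.span ({0} : Set D)).radical :=
            h2 (Ideal.le_radical (Ideal.subset_span rfl))
          rw [Set.singleton_zero, Ideal.span_zero] at this
          obtain ⟨n, hn⟩ := Ideal.mem_radical_iff.mp this
          exact ha'0 (pow_eq_zero_iff'.mp (by simpa using hn)).1
        refine ⟨b, by simp, hb0, ?_⟩
        rw [Finset.coe_insert, Ideal.span_insert]
        refine sup_le Ideal.le_radical (hle.trans h2)

end Aux


section Core
variable {D : Type*} [CommRing D] [IsDomain D]

theorem vclos_le_of_prime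
    (hlin : ∀ P Q : Ideal D, P.IsPrime → Q.IsPrime → P ≤ Q ∨ Q ≤ P)
    {P : Ideal D} (hP : P.IsPrime)
    (F : FractionalIdeal D⁰ (FractionRing D)) (hF0 : F ≠ 0)
    (hFP : F ≤ (P : FractionalIdeal D⁰ (FractionRing D)))
    (hFG : (F : Submodule D (FractionRing D)).FG) :
    (F⁻¹⁻¹ : FractionalIdeal D⁰ (FractionRing D)) ≤ (P : FractionalIdeal D⁰ (FractionRing D)) := by
  classical
  set K := FractionRing D
  have hinj : Function.Injective (algebraMap D K) := IsFractionRing.injective D K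
  -- F is an integral ideal
  have hF1 : F ≤ 1 := hFP.trans FractionalIdeal.coeIdeal_le_one
  obtain ⟨I, rfl⟩ := FractionalIdeal.le_one_iff_exists_coeIdeal.mp hF1
  have hI0 : I ≠ ⊥ := by
    simpa [FractionalIdeal.coeIdeal_eq_zero] using hF0
  have hIP : I ≤ P := (FractionalIdeal.coeIdeal_le_coeIdeal K).mp hFP
  have hIfg : I.FG := by
    apply Submodule.fg_of_fg_map_injective (Algebra.linearMap D K) hinj
    rwa [show Submodule.map (Algebra.linearMap D K) I
      = ((I : FractionalIdeal D⁰ K) : Submodule D K) from rfl]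
  -- pick a dominant generator
  obtain ⟨s, hs⟩ := id hIfg
  have hsP : ↑s ⊆ (P : Set D) := fun x hx => hIP (hs ▸ Ideal.subset_span hx)
  obtain ⟨a, has, ha0, hrad⟩ := exists_dominant_generator hlin hP s hsP (hs ▸ hI0)
  rw [hs] at hrad
  set spanA := Ideal.span ({a} : Set D) with hspanA
  have haP : a ∈ P := hsP has
  have hspanA_ne_top : spanA ≠ ⊤ := fun h => hP.ne_top (top_le_iff.mp
    (h ▸ Ideal.span_le.mpr (Set.singleton_subset_iff.mpr haP)))
  set Q := spanA.radical with hQdef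
  have hQ : Q.IsPrime := radical_isPrime_of_lin hlin hspanA_ne_top
  have hQP : Q ≤ P := hP.radical_le_iff.mpr (Ideal.span_le.mpr (Set.singleton_subset_iff.mpr haP))
  -- ∃ N, I ^ N ≤ spanA
  obtain ⟨N, hN⟩ := Ideal.exists_pow_le_of_le_radical_of_fg hrad ⟨s, hs⟩
  -- minimal k = m+1 such that u * I^(m+1) ⊆ spanA for some u ∉ Q
  set pred : ℕ → Prop := fun m => ∃ u ∉ Q, I ^ (m + 1) ≤ spanA.colon (Ideal.span {u}) with hpred
  have hex : pred N := by
    refine ⟨1, fun h => hQ.ne_top (Ideal.eq_top_iff_one _ |>.mpr h), ?_⟩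
    refine (Ideal.pow_le_pow_right (by omega)).trans (hN.trans ?_)
    intro x hx
    rw [Ideal.mem_colon_span_singleton, mul_one]
    exact hx
  have hexist : ∃ m, pred m := ⟨N, hex⟩
  set m₀ := Nat.find hexist with hm₀
  obtain ⟨u, huQ, hcolon⟩ : pred m₀ := Nat.find_spec hexist
  -- the witness y ∈ I ^ m₀ not in a·D_Q
  have hy : ∃ y ∈ I ^ m₀, ∀ v, v ∉ Q → v * y ∉ spanA := by
    rcases Nat.eq_zero_or_pos m₀ with h0 | hpos
    · refine ⟨1, by simp [h0], ?_⟩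
      intro v hv hva
      rw [mul_one] at hva
      exact hv (Ideal.le_radical hva)
    · by_contra hcon
      push_neg at hcon
      -- build a single multiplier
      obtain ⟨t, ht⟩ := Submodule.FG.pow hIfg m₀
      choose f hfQ hfa using fun (y : {x // x ∈ t}) =>
        hcon (y : D) (by rw [← ht]; exact Submodule.subset_span y.2)
      set v := ∏ y ∈ t.attach, f y with hv
      have hvQ : v ∉ Q := by
        intro hvmem
        rcases (Ideal.IsPrime.prod_mem_iff (hp := hQ)).mp hvmem with ⟨i, _, hi⟩
        exact hfQ i hi
      have hle' : I ^ ((m₀ - 1) + 1) ≤ spanA.colon (Ideal.span {v}) := by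
        rw [Nat.sub_add_cancel hpos, ← ht, Submodule.span_le]
        intro y hyt
        rw [SetLike.mem_coe, Ideal.mem_colon_span_singleton]
        have hsplit : v = f ⟨y, hyt⟩ * ∏ z ∈ t.attach.erase ⟨y, hyt⟩, f z :=
          (Finset.mul_prod_erase t.attach f (Finset.mem_attach t ⟨y, hyt⟩)).symm
        have : y * v = (f ⟨y, hyt⟩ * y) * ∏ z ∈ t.attach.erase ⟨y, hyt⟩, f z := by
          rw [hsplit]; ring
        rw [this]
        exact Ideal.mul_mem_right _ _ (hfa ⟨y, hyt⟩)
      exact Nat.find_min hexist (show m₀ - 1 < m₀ by omega) ⟨v, hvQ, hle'⟩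
  obtain ⟨y, hyI, hyprop⟩ := hy
  have hIK0 : (I : FractionalIdeal D⁰ K) ≠ 0 := hF0
  have h1mem : (1 : K) ∈ ((I : FractionalIdeal D⁰ K))⁻¹ := by
    rw [FractionalIdeal.mem_inv_iff hIK0]
    intro x hx
    obtain ⟨x₀, hx₀I, rfl⟩ := (FractionalIdeal.mem_coeIdeal _).mp hx
    exact FractionalIdeal.mem_one_iff _ |>.mpr ⟨x₀, by rw [one_mul]⟩
  have hinv0 : ((I : FractionalIdeal D⁰ K))⁻¹ ≠ 0 := by
    intro h
    rw [h] at h1mem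
    exact one_ne_zero ((FractionalIdeal.mem_zero_iff _).mp h1mem)
  intro z hz0
  have hz : ∀ w ∈ ((I : FractionalIdeal D⁰ K))⁻¹, z * w ∈ (1 : FractionalIdeal D⁰ K) :=
    (FractionalIdeal.mem_inv_iff hinv0).mp hz0
  suffices hgoal : z ∈ (P : FractionalIdeal D⁰ K) from hgoal
  have hz1 : z ∈ (1 : FractionalIdeal D⁰ K) := by simpa using hz 1 h1mem
  obtain ⟨z₀, hz₀⟩ := (FractionalIdeal.mem_one_iff _).mp hz1
  by_cases hzP : z₀ ∈ P
  · exact (FractionalIdeal.mem_coeIdeal _).mpr ⟨z₀, hzP, hz₀⟩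
  exfalso
  have hzQ : z₀ ∉ Q := fun h => hzP (hQP h)
  have ha0K : algebraMap D K a ≠ 0 := fun h => ha0 (hinj (by rw [h, map_zero]))
  set w : K := algebraMap D K (u * y) / algebraMap D K a with hw
  have hwmem : w ∈ ((I : FractionalIdeal D⁰ K))⁻¹ := by
    rw [FractionalIdeal.mem_inv_iff hIK0]
    intro x hx
    obtain ⟨x₀, hx₀I, rfl⟩ := (FractionalIdeal.mem_coeIdeal _).mp hx
    have hxk : y * x₀ ∈ I ^ (m₀ + 1) := by
      rw [pow_succ]
      exact Ideal.mul_mem_mul hyI hx₀I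
    have hmem : (y * x₀) * u ∈ spanA := Ideal.mem_colon_span_singleton.mp (hcolon hxk)
    obtain ⟨c, hc⟩ := Ideal.mem_span_singleton'.mp hmem
    refine (FractionalIdeal.mem_one_iff _).mpr ⟨c, ?_⟩
    rw [hw, div_mul_eq_mul_div, eq_div_iff ha0K, ← map_mul, ← map_mul]
    exact congrArg (algebraMap D K) (by linear_combination hc)
  have hzw := hz w hwmem
  obtain ⟨d, hd⟩ := (FractionalIdeal.mem_one_iff _).mp hzw
  have heq : d * a = z₀ * (u * y) := by
    apply hinj
    rw [map_mul, map_mul]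
    have : algebraMap D K d = z * w := hd
    rw [this, ← hz₀, hw]
    field_simp
    exact div_mul_cancel₀ _ ha0K
  have hmem2 : (z₀ * u) * y ∈ spanA :=
    Ideal.mem_span_singleton'.mpr ⟨d, by linear_combination heq⟩
  have hvQ2 : z₀ * u ∉ Q := fun h => (hQ.mem_or_mem h).elim hzQ huQ
  exact hyprop (z₀ * u) hvQ2 hmem2

theorem le_inv_inv_of_le_one (F : FractionalIdeal D⁰ (FractionRing D)) (hF0 : F ≠ 0)
    (hF1 : F ≤ 1) : F ≤ F⁻¹⁻¹ := by
  have h1mem : (1 : FractionRing D) ∈ F⁻¹ := by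
    rw [FractionalIdeal.mem_inv_iff hF0]
    intro y hy
    rw [one_mul]
    exact hF1 hy
  have hinv0 : F⁻¹ ≠ 0 := by
    intro h
    rw [h] at h1mem
    exact one_ne_zero ((FractionalIdeal.mem_zero_iff _).mp h1mem)
  intro w hw
  have hw' : w ∈ F := hw
  suffices h : w ∈ F⁻¹⁻¹ from h
  rw [FractionalIdeal.mem_inv_iff hinv0]
  intro v hv
  rw [mul_comm]
  exact (FractionalIdeal.mem_inv_iff hF0).mp hv w hw'

theorem isT_of_prime (hlin : ∀ P Q : Ideal D, P.IsPrime → Q.IsPrime → P ≤ Q ∨ Q ≤ P)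
    {P : Ideal D} (hP : P.IsPrime) : P.IsT := by
  show ((P : FractionalIdeal D⁰ (FractionRing D)) : Submodule D (FractionRing D)) = tClos D ↑P
  apply le_antisymm
  · intro x hx
    obtain ⟨x₀, hx₀P, rfl⟩ := (IsLocalization.mem_coeSubmodule _ _).mp hx
    by_cases hx0 : algebraMap D (FractionRing D) x₀ = 0
    · rw [hx0]; exact Submodule.zero_mem _
    set F := FractionalIdeal.spanSingleton D⁰ (algebraMap D (FractionRing D) x₀) with hF
    have hF0 : F ≠ 0 := FractionalIdeal.spanSingleton_ne_zero_iff.mpr hx0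
    have hFle : F ≤ (P : FractionalIdeal D⁰ (FractionRing D)) :=
      FractionalIdeal.spanSingleton_le_iff_mem.mpr
        ((FractionalIdeal.mem_coeIdeal _).mpr ⟨x₀, hx₀P, rfl⟩)
    have hFG : (F : Submodule D (FractionRing D)).FG := by
      rw [hF, FractionalIdeal.coe_spanSingleton]
      exact Submodule.fg_span_singleton _
    have hsup : (((F⁻¹)⁻¹ : FractionalIdeal D⁰ (FractionRing D)) :
        Submodule D (FractionRing D)) ≤ tClos D ↑P :=
      le_iSup₂ (f := fun (F : FractionalIdeal D⁰ (FractionRing D)) (_ : F ∈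
        {F : FractionalIdeal D⁰ (FractionRing D) |
          F ≠ 0 ∧ F ≤ (P : FractionalIdeal D⁰ (FractionRing D)) ∧
            (F : Submodule D (FractionRing D)).FG}) =>
        (((F⁻¹)⁻¹ : FractionalIdeal D⁰ (FractionRing D)) : Submodule D (FractionRing D)))
        F ⟨hF0, hFle, hFG⟩
    apply hsup
    have hxF : algebraMap D (FractionRing D) x₀ ∈ F :=
      FractionalIdeal.mem_spanSingleton_self _ _
    exact le_inv_inv_of_le_one F hF0 (hFle.trans FractionalIdeal.coeIdeal_le_one) hxF
  · apply iSup₂_le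
    rintro F ⟨h0, hle, hfg⟩
    exact FractionalIdeal.coe_le_coe.mpr (vclos_le_of_prime hlin hP F h0 hle hfg)

end Core


/-- If `(D, M)` is a local integral domain whose prime ideals are pairwise comparable
(i.e. `Spec D` is linearly ordered by inclusion), then `D` is `t`-local; moreover every
nonzero prime ideal of `D` is a `t`-ideal. -/
theorem t_local_of_linearly_ordered_spectrum {D : Type*} [CommRing D] [IsDomain D]
    [IsLocalRing D]
    (hlin : ∀ P Q : Ideal D, P.IsPrime → Q.IsPrime → P ≤ Q ∨ Q ≤ P) :
    (IsLocalRing.maximalIdeal D).IsT ∧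
      ∀ P : Ideal D, P.IsPrime → P ≠ ⊥ → P.IsT :=
  ⟨isT_of_prime hlin (IsLocalRing.maximalIdeal.isMaximal D).isPrime,
    fun _ hP _ => isT_of_prime hlin hP⟩
end

section
/- Let D be a t-local domain. Then: (1) every t-invertible ideal I of D (i.e., an ideal with (I I^{-1})^t = D) is principal; (2) if I is an ideal of D such that (I^n)^t = D for some n ≥ 2, then I is principal. -/
/-!
In a `t`-local domain the maximal ideal is a `t`-ideal, so the `t`-closure of every proper
ideal stays inside it; hence an integral ideal whose `t`-closure is `D` is already `D`.
Thus `t`-invertibility of `I` means `I I⁻¹ = D`, i.e. `I` is invertible, and invertible ideals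
of a local domain are principal. Likewise `(Iⁿ)^t = D` forces `Iⁿ = D`, hence `I = D`.
-/

open scoped nonZeroDivisors

section TClosure

variable {D : Type*} [CommRing D] [IsDomain D]

lemma tClos_mono {E E' : FractionalIdeal D⁰ (FractionRing D)} (h : E ≤ E') :
    tClos D E ≤ tClos D E' :=
  iSup₂_le fun F hF => le_iSup₂_of_le F ⟨hF.1, hF.2.1.trans h, hF.2.2⟩ le_rfl

lemma Ideal.IsT.tClos_le {P J : Ideal D} (hP : P.IsT) (hJ : J ≤ P) :
    tClos D J ≤ ((P : FractionalIdeal D⁰ (FractionRing D)) : Submodule D (FractionRing D)) := by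
  rw [hP]
  exact tClos_mono ((FractionalIdeal.coeIdeal_le_coeIdeal _).mpr hJ)

lemma Ideal.eq_top_of_tClos_eq_one [IsLocalRing D] (htl : (IsLocalRing.maximalIdeal D).IsT)
    {J : Ideal D}
    (h : tClos D J =
      ((1 : FractionalIdeal D⁰ (FractionRing D)) : Submodule D (FractionRing D))) :
    J = ⊤ := by
  by_contra hJ
  have hle := htl.tClos_le (IsLocalRing.le_maximalIdeal hJ)
  rw [h, FractionalIdeal.coe_le_coe, ← FractionalIdeal.coeIdeal_top,
    FractionalIdeal.coeIdeal_le_coeIdeal, top_le_iff] at hle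
  exact (IsLocalRing.maximalIdeal.isMaximal D).ne_top hle

lemma FractionalIdeal.eq_one_of_tClos_eq_one [IsLocalRing D]
    (htl : (IsLocalRing.maximalIdeal D).IsT) {E : FractionalIdeal D⁰ (FractionRing D)}
    (hE : E ≤ 1)
    (h : tClos D E =
      ((1 : FractionalIdeal D⁰ (FractionRing D)) : Submodule D (FractionRing D))) :
    E = 1 := by
  obtain ⟨J, rfl⟩ := FractionalIdeal.le_one_iff_exists_coeIdeal.mp hE
  rw [Ideal.eq_top_of_tClos_eq_one htl h, FractionalIdeal.coeIdeal_top]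

end TClosure

/-- Let `D` be a `t`-local domain. Then:
(1) every `t`-invertible ideal `I` of `D` (i.e. `(I I⁻¹)^t = D`) is principal;
(2) if `I` is an ideal of `D` with `(I^n)^t = D` for some `n ≥ 2`, then `I` is
principal. -/
theorem t_local_t_invertible_principal {D : Type*} [CommRing D] [IsDomain D]
    [IsLocalRing D] (htl : (IsLocalRing.maximalIdeal D).IsT) :
    (∀ I : Ideal D,
        tClos D ((I : FractionalIdeal D⁰ (FractionRing D)) *
            (I : FractionalIdeal D⁰ (FractionRing D))⁻¹) =
          ((1 : FractionalIdeal D⁰ (FractionRing D)) : Submodule D (FractionRing D)) →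
        I.IsPrincipal) ∧
    (∀ (I : Ideal D) (n : ℕ), 2 ≤ n →
        tClos D ((I ^ n : Ideal D) : FractionalIdeal D⁰ (FractionRing D)) =
          ((1 : FractionalIdeal D⁰ (FractionRing D)) : Submodule D (FractionRing D)) →
        I.IsPrincipal) := by
  constructor
  · intro I h
    have hinv : (I : FractionalIdeal D⁰ (FractionRing D)) *
        (I : FractionalIdeal D⁰ (FractionRing D))⁻¹ = 1 :=
      FractionalIdeal.eq_one_of_tClos_eq_one htl FractionalIdeal.mul_one_div_le_one h
    exact Ideal.IsPrincipal.of_finite_maximals_of_isUnit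
      ((Set.finite_singleton _).subset fun _ => IsLocalRing.eq_maximalIdeal)
      ((FractionalIdeal.mul_inv_cancel_iff_isUnit _).mp hinv)
  · intro I n hn h
    have hpow : I ^ n = ⊤ := Ideal.eq_top_of_tClos_eq_one htl h
    obtain rfl : I = ⊤ := (Ideal.pow_eq_top_iff.mp hpow).resolve_right (by omega)
    exact top_isPrincipal
end

section
/- An integral domain D is a valuation domain if and only if every nonzero prime ideal of D contains a comparable element. -/
open scoped nonZeroDivisors

/-- A nonzero element `c` of a domain `D` is comparable if for every `x ∈ D`,
either `cD ⊆ xD` or `xD ⊆ cD`. -/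
def IsComparable {D : Type*} [CommRing D] (c : D) : Prop :=
  c ≠ 0 ∧ ∀ x : D, Ideal.span {c} ≤ Ideal.span {x} ∨ Ideal.span {x} ≤ Ideal.span {c}

/-!
If every nonzero prime contains a comparable element, then every nonzero `a` divides some
comparable `c`: the comparable elements form a multiplicative set, and a prime ideal containing
`a` and avoiding it would be a nonzero prime without comparable elements. Writing `c = a * y`,
comparing `c` with `b * y` and cancelling `y` shows `a ∣ b` or `b ∣ a`.
-/

theorem isComparable_iff {D : Type*} [CommRing D] {c : D} :
    IsComparable c ↔ c ≠ 0 ∧ ∀ x : D, x ∣ c ∨ c ∣ x := by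
  simp only [IsComparable, Ideal.span_singleton_le_span_singleton]

theorem IsComparable.mul {D : Type*} [CommRing D] [NoZeroDivisors D] {c d : D}
    (hc : IsComparable c) (hd : IsComparable d) : IsComparable (c * d) := by
  rw [isComparable_iff] at hc hd ⊢
  refine ⟨mul_ne_zero hc.1 hd.1, fun x => ?_⟩
  obtain hxc | ⟨x', rfl⟩ := hc.2 x
  · exact Or.inl (hxc.mul_right d)
  · exact (hd.2 x').imp (mul_dvd_mul_left c) (mul_dvd_mul_left c)

def comparableSubmonoid (D : Type*) [CommRing D] [IsDomain D] : Submonoid D where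
  carrier := {c | IsComparable c}
  one_mem' := isComparable_iff.2 ⟨one_ne_zero, fun x => Or.inr (one_dvd x)⟩
  mul_mem' := IsComparable.mul

theorem exists_dvd_mem_of_forall_prime_ne_bot {R : Type*} [CommRing R] (S : Submonoid R)
    (hS : ∀ P : Ideal R, P.IsPrime → P ≠ ⊥ → ∃ c ∈ P, c ∈ S) {a : R} (ha : a ≠ 0) :
    ∃ c ∈ S, a ∣ c := by
  by_contra! hno
  have hdisj : Disjoint (Ideal.span {a} : Set R) S :=
    Set.disjoint_left.2 fun x hx hxS => hno x hxS (Ideal.mem_span_singleton.1 hx)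
  obtain ⟨P, hP, haP, hPS⟩ := Ideal.exists_le_prime_disjoint _ S hdisj
  have hP0 : P ≠ ⊥ := fun h =>
    ha (Ideal.span_singleton_eq_bot.1 (le_bot_iff.1 (h ▸ haP)))
  obtain ⟨c, hcP, hcS⟩ := hS P hP hP0
  exact Set.disjoint_left.1 hPS hcP hcS

theorem dvd_or_dvd_of_dvd_isComparable {D : Type*} [CommRing D] [IsDomain D] {a c : D}
    (hc : IsComparable c) (hac : a ∣ c) (b : D) : a ∣ b ∨ b ∣ a := by
  obtain ⟨y, rfl⟩ := hac
  rw [isComparable_iff] at hc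
  have hy : y ≠ 0 := right_ne_zero_of_mul hc.1
  obtain hbc | hcb := hc.2 (b * y)
  · exact Or.inr ((mul_dvd_mul_iff_right hy).1 hbc)
  · exact Or.inl ((mul_dvd_mul_iff_right hy).1 hcb)

/-- An integral domain `D` is a valuation domain if and only if every nonzero prime
ideal of `D` contains a comparable element. -/
theorem valuationRing_iff_primes_contain_comparable (D : Type*) [CommRing D]
    [IsDomain D] :
    ValuationRing D ↔
      ∀ P : Ideal D, P.IsPrime → P ≠ ⊥ → ∃ c ∈ P, IsComparable c := by
  rw [ValuationRing.iff_dvd_total]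
  constructor
  · intro h P _ hP0
    obtain ⟨c, hcP, hc0⟩ := Submodule.exists_mem_ne_zero_of_ne_bot hP0
    exact ⟨c, hcP, isComparable_iff.2 ⟨hc0, fun x => h.total x c⟩⟩
  · refine fun h => ⟨fun a b => ?_⟩
    rcases eq_or_ne a 0 with rfl | ha
    · exact Or.inr (dvd_zero b)
    obtain ⟨c, hc, hac⟩ := exists_dvd_mem_of_forall_prime_ne_bot (comparableSubmonoid D) h ha
    exact dvd_or_dvd_of_dvd_isComparable hc hac b
end

section
/- Let D be an integral domain containing a nonzero nonunit comparable element, and let C be the set of all nonzero comparable elements of D. Then: (1) P := ⋂{cD : c ∈ C} is a prime ideal of D and D \ P = C (in particular, C is a saturated multiplicative subset of D); (2) the quotient D/P is a valuation domain; (3) P = PD_P, i.e., P coincides with its extension to the localization D_P; (4) D is local and P is comparable under inclusion with every ideal of D. -/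
open scoped nonZeroDivisors

/-!
An element outside `P` is not divisible by some comparable `c`, hence divides `c` and is
comparable itself; conversely a comparable `x ∈ P` would be divisible by `x²`, hence a unit,
forcing `P = D`, which the nonunit comparable element rules out. So `D \ P` is the set of
comparable elements, which is multiplicatively closed, and `P` is prime. Any two elements
outside `P` are comparable under divisibility, which makes `D ⧸ P` a valuation ring, and an
element `s ∉ P` divides every `p ∈ P`, which gives `P = PD_P` and `P ≤ I` for every `I ⊈ P`.
Finally, a sum of two nonunits lies in `P ≠ D` or is divisible by one of them, so `D` is local.
-/

theorem isUnit_or_isUnit_of_isUnit_add_of_dvd_or_dvd {R : Type*} [CommRing R] {x y : R}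
    (hxy : x ∣ y ∨ y ∣ x) (hu : IsUnit (x + y)) : IsUnit x ∨ IsUnit y := by
  rcases hxy with hxy | hyx
  · exact Or.inl (isUnit_of_dvd_unit (dvd_add dvd_rfl hxy) hu)
  · exact Or.inr (isUnit_of_dvd_unit (dvd_add hyx dvd_rfl) hu)

theorem Ideal.valuationRing_quotient_of_dvd_or_dvd {R : Type*} [CommRing R] (P : Ideal R)
    [P.IsPrime] (h : ∀ x ∉ P, ∀ y ∉ P, x ∣ y ∨ y ∣ x) : ValuationRing (R ⧸ P) := by
  refine ValuationRing.iff_dvd_total.mpr ⟨fun a b => ?_⟩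
  obtain ⟨x, rfl⟩ := Ideal.Quotient.mk_surjective a
  obtain ⟨y, rfl⟩ := Ideal.Quotient.mk_surjective b
  by_cases hx : x ∈ P
  · exact Or.inr (by simp [Ideal.Quotient.eq_zero_iff_mem.mpr hx])
  by_cases hy : y ∈ P
  · exact Or.inl (by simp [Ideal.Quotient.eq_zero_iff_mem.mpr hy])
  exact (h x hx y hy).imp (map_dvd _) (map_dvd _)

section IsComparable

variable {D : Type*} [CommRing D]

theorem isComparable_iff_dvd_or_dvd {c : D} :
    IsComparable c ↔ c ≠ 0 ∧ ∀ x : D, x ∣ c ∨ c ∣ x := by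
  simp [IsComparable, Ideal.mem_span_singleton]

theorem IsComparable.ne_zero {c : D} (hc : IsComparable c) : c ≠ 0 := hc.1

theorem IsComparable.dvd_or_dvd {c : D} (hc : IsComparable c) (x : D) : x ∣ c ∨ c ∣ x :=
  (isComparable_iff_dvd_or_dvd.mp hc).2 x

variable [IsDomain D]

theorem IsComparable.mul_s10 {a b : D} (ha : IsComparable a) (hb : IsComparable b) :
    IsComparable (a * b) := by
  refine isComparable_iff_dvd_or_dvd.mpr ⟨mul_ne_zero ha.ne_zero hb.ne_zero, fun x => ?_⟩
  rcases ha.dvd_or_dvd x with hxa | ⟨y, rfl⟩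
  · exact Or.inl (hxa.mul_right b)
  · exact (hb.dvd_or_dvd y).imp (mul_dvd_mul_left a) (mul_dvd_mul_left a)

theorem IsComparable.of_dvd {a c : D} (hc : IsComparable c) (hac : a ∣ c) : IsComparable a := by
  obtain ⟨b, rfl⟩ := hac
  have hb : b ≠ 0 := right_ne_zero_of_mul hc.ne_zero
  refine isComparable_iff_dvd_or_dvd.mpr ⟨left_ne_zero_of_mul hc.ne_zero, fun y => ?_⟩
  rw [← mul_dvd_mul_iff_left hb, ← mul_dvd_mul_iff_left hb (b := a), mul_comm b a]
  exact hc.dvd_or_dvd (b * y)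

theorem IsComparable.isUnit_of_mul_self_dvd {x : D} (hx : IsComparable x) (h : x * x ∣ x) :
    IsUnit x :=
  isUnit_of_dvd_one ((mul_dvd_mul_iff_left hx.ne_zero).mp (by rwa [mul_one]))

end IsComparable

section ComparableIdeal

variable (D : Type*) [CommRing D]

def comparableIdeal : Ideal D :=
  ⨅ c ∈ {c : D | IsComparable c}, Ideal.span {c}

variable {D}

theorem mem_comparableIdeal {x : D} :
    x ∈ comparableIdeal D ↔ ∀ c : D, IsComparable c → c ∣ x := by
  simp [comparableIdeal, Ideal.mem_span_singleton]

theorem comparableIdeal_ne_top {c : D} (hc : IsComparable c) (hcu : ¬IsUnit c) :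
    comparableIdeal D ≠ ⊤ := fun htop =>
  hcu (isUnit_of_dvd_one (mem_comparableIdeal.mp (htop ▸ Submodule.mem_top) c hc))

variable [IsDomain D]

theorem isComparable_of_notMem_comparableIdeal {x : D} (hx : x ∉ comparableIdeal D) :
    IsComparable x := by
  obtain ⟨c, hc, hcx⟩ : ∃ c, IsComparable c ∧ ¬c ∣ x := by
    simpa [mem_comparableIdeal] using hx
  exact hc.of_dvd ((hc.dvd_or_dvd x).resolve_right hcx)

theorem IsComparable.isUnit_of_mem_comparableIdeal {x : D} (hx : IsComparable x)
    (hxP : x ∈ comparableIdeal D) : IsUnit x :=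
  hx.isUnit_of_mul_self_dvd (mem_comparableIdeal.mp hxP _ (hx.mul_s10 hx))

theorem notMem_comparableIdeal_iff {c : D} (hc : IsComparable c) (hcu : ¬IsUnit c) {x : D} :
    x ∉ comparableIdeal D ↔ IsComparable x := by
  refine ⟨isComparable_of_notMem_comparableIdeal, fun hx hxP => ?_⟩
  exact comparableIdeal_ne_top hc hcu
    (Ideal.eq_top_of_isUnit_mem _ hxP (hx.isUnit_of_mem_comparableIdeal hxP))

theorem comparableIdeal_isPrime {c : D} (hc : IsComparable c) (hcu : ¬IsUnit c) :
    (comparableIdeal D).IsPrime := by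
  refine ⟨comparableIdeal_ne_top hc hcu, fun {a b} hab => ?_⟩
  by_contra! hnot
  exact (notMem_comparableIdeal_iff hc hcu).mpr
    ((isComparable_of_notMem_comparableIdeal hnot.1).mul_s10
      (isComparable_of_notMem_comparableIdeal hnot.2)) hab

theorem dvd_or_dvd_of_notMem_comparableIdeal {x : D} (hx : x ∉ comparableIdeal D) (y : D) :
    x ∣ y ∨ y ∣ x :=
  (isComparable_of_notMem_comparableIdeal hx).dvd_or_dvd y |>.symm

theorem le_comparableIdeal_or_comparableIdeal_le (I : Ideal D) :
    I ≤ comparableIdeal D ∨ comparableIdeal D ≤ I := by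
  refine or_iff_not_imp_left.mpr fun hI => ?_
  obtain ⟨a, haI, haP⟩ := SetLike.not_le_iff_exists.mp hI
  intro p hp
  obtain ⟨t, rfl⟩ := mem_comparableIdeal.mp hp a (isComparable_of_notMem_comparableIdeal haP)
  exact I.mul_mem_right t haI

theorem isLocalRing_of_isComparable {c : D} (hc : IsComparable c) (hcu : ¬IsUnit c) :
    IsLocalRing D := by
  refine IsLocalRing.of_isUnit_or_isUnit_of_isUnit_add fun a b hu => ?_
  by_cases ha : a ∈ comparableIdeal D
  · by_cases hb : b ∈ comparableIdeal D
    · exact absurd (Ideal.eq_top_of_isUnit_mem _ (add_mem ha hb) hu)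
        (comparableIdeal_ne_top hc hcu)
    · exact isUnit_or_isUnit_of_isUnit_add_of_dvd_or_dvd
        (dvd_or_dvd_of_notMem_comparableIdeal hb a).symm hu
  · exact isUnit_or_isUnit_of_isUnit_add_of_dvd_or_dvd
      (dvd_or_dvd_of_notMem_comparableIdeal ha b) hu

end ComparableIdeal

/-- Let `D` be an integral domain containing a nonzero nonunit comparable element and
let `P := ⋂ {cD : c comparable}`. Then:
(1) `P` is a prime ideal of `D` and `D \ P` is exactly the set of (nonzero) comparable
elements of `D`;
(2) `D/P` is a valuation domain;
(3) `P = PD_P` (every element `p/s` of `PD_P`, `p ∈ P`, `s ∉ P`, already lies in `P`);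
(4) `D` is local and `P` is comparable under inclusion with every ideal of `D`. -/
theorem comparable_element_structure (D : Type*) [CommRing D] [IsDomain D]
    (h : ∃ c : D, IsComparable c ∧ ¬ IsUnit c)
    (P : Ideal D) (hP : P = ⨅ c ∈ {c : D | IsComparable c}, Ideal.span {c}) :
    ∃ hp : P.IsPrime,
      (∀ x : D, x ∉ P ↔ IsComparable x) ∧
      (letI := hp; ValuationRing (D ⧸ P)) ∧
      (∀ p ∈ P, ∀ s ∉ P, ∃ q ∈ P, p = s * q) ∧
      IsLocalRing D ∧
      (∀ I : Ideal D, I ≤ P ∨ P ≤ I) := by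
  obtain ⟨c, hc, hcu⟩ := h
  change P = comparableIdeal D at hP
  subst hP
  have hp := comparableIdeal_isPrime hc hcu
  refine ⟨hp, fun x => notMem_comparableIdeal_iff hc hcu,
    (comparableIdeal D).valuationRing_quotient_of_dvd_or_dvd
      fun x hx y _ => dvd_or_dvd_of_notMem_comparableIdeal hx y,
    fun p hpP s hs => ?_, isLocalRing_of_isComparable hc hcu,
    le_comparableIdeal_or_comparableIdeal_le⟩
  obtain ⟨q, rfl⟩ := mem_comparableIdeal.mp hpP s (isComparable_of_notMem_comparableIdeal hs)
  exact ⟨q, (hp.mem_or_mem hpP).resolve_left hs, rfl⟩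
end

section
/- Suppose an integral domain D contains a nonzero nonunit comparable element x, and let Q := ⋂_{n ≥ 0} x^n D. Then Q is a prime ideal of D, and D is a valuation domain if and only if the localization D_Q is a valuation domain. -/
theorem PreValuationRing.of_isLocalization {R S : Type*} [CommSemiring R] [CommSemiring S]
    [Algebra R S] (M : Submonoid R) [IsLocalization M S] [PreValuationRing R] :
    PreValuationRing S := by
  have associated_algebraMap (z : S) : ∃ a : R, Associated z (algebraMap R S a) :=
    let ⟨⟨a, s⟩, h⟩ := IsLocalization.surj M z
    ⟨a, (IsLocalization.map_units S s).unit, h⟩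
  refine PreValuationRing.iff_dvd_total.mpr ⟨fun f g => ?_⟩
  obtain ⟨a, ha⟩ := associated_algebraMap f
  obtain ⟨b, hb⟩ := associated_algebraMap g
  rw [ha.dvd_iff_dvd_left, hb.dvd_iff_dvd_right, ha.dvd_iff_dvd_right, hb.dvd_iff_dvd_left]
  exact (ValuationRing.dvd_total a b).imp (map_dvd _) (map_dvd _)

theorem IsLocalization.exists_mul_eq_mul_of_algebraMap_dvd {R S : Type*} [CommSemiring R]
    [CommSemiring S] [Algebra R S] (M : Submonoid R) [IsLocalization M S] {a b : R}
    (h : algebraMap R S a ∣ algebraMap R S b) : ∃ t ∈ M, ∃ c, t * b = a * c := by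
  obtain ⟨z, hz⟩ := h
  obtain ⟨⟨c, s⟩, hc⟩ := IsLocalization.surj M z
  have : algebraMap R S (b * s) = algebraMap R S (a * c) := by
    simp only [map_mul, hz, ← hc]; ring
  obtain ⟨u, hu⟩ := (IsLocalization.eq_iff_exists M S).mp this
  refine ⟨u * s, M.mul_mem u.2 s.2, u * c, ?_⟩
  calc (u : R) * s * b = u * (b * s) := by ring
    _ = u * (a * c) := hu
    _ = a * (u * c) := by ring

namespace IsComparable

variable {D : Type*} [CommRing D]

theorem iff_dvd {c : D} : IsComparable c ↔ c ≠ 0 ∧ ∀ y : D, y ∣ c ∨ c ∣ y := by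
  simp [IsComparable, Ideal.mem_span_singleton]

variable [IsDomain D]

theorem mul_s12 {c d : D} (hc : IsComparable c) (hd : IsComparable d) : IsComparable (c * d) := by
  rw [iff_dvd] at *
  refine ⟨mul_ne_zero hc.1 hd.1, fun y => ?_⟩
  rcases hc.2 y with h | ⟨y₁, rfl⟩
  · exact Or.inl (h.mul_right d)
  rcases hd.2 y₁ with h | h
  · exact Or.inl (mul_dvd_mul_left c h)
  · exact Or.inr (mul_dvd_mul_left c h)

theorem one : IsComparable (1 : D) :=
  iff_dvd.mpr ⟨one_ne_zero, fun y => Or.inr (one_dvd y)⟩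

theorem pow {x : D} (hx : IsComparable x) (n : ℕ) : IsComparable (x ^ n) := by
  induction n with
  | zero => simpa using one
  | succ n ih => rw [pow_succ]; exact ih.mul_s12 hx

theorem dvd_total_of_dvd {c a b : D} (hc : IsComparable c) (ha : a ∣ c) (hb : b ∣ c) :
    a ∣ b ∨ b ∣ a := by
  rw [iff_dvd] at hc
  obtain ⟨a₁, rfl⟩ := ha
  obtain ⟨b₁, hb₁⟩ := hb
  have hb₁0 : b₁ ≠ 0 := by rintro rfl; exact hc.1 (by simp [hb₁])
  -- compare `c = a * a₁ = b * b₁` with `a * b₁`, then cancel `b₁` or `a₁`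
  rcases hc.2 (a * b₁) with ⟨d, hd⟩ | ⟨d, hd⟩
  · exact Or.inl ⟨d, mul_right_cancel₀ hb₁0 (by rw [← hb₁, hd]; ring)⟩
  · have ha0 : a ≠ 0 := left_ne_zero_of_mul hc.1
    have ha₁0 : a₁ ≠ 0 := right_ne_zero_of_mul hc.1
    have hb₁' : b₁ = a₁ * d := mul_left_cancel₀ ha0 (by rw [hd]; ring)
    exact Or.inr ⟨d, mul_right_cancel₀ ha₁0 (by rw [hb₁, hb₁']; ring)⟩

theorem of_dvd_s12 {c s : D} (hc : IsComparable c) (hs : s ∣ c) : IsComparable s := by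
  refine iff_dvd.mpr ⟨fun h => hc.1 (zero_dvd_iff.mp (h ▸ hs)), fun y => ?_⟩
  rcases (iff_dvd.mp hc).2 y with hy | hy
  · exact hc.dvd_total_of_dvd hy hs
  · exact Or.inr (hs.trans hy)

theorem dvd_or_dvd_of_mul_eq_mul {t a b c : D} (ht : IsComparable t) (h : t * b = a * c) :
    a ∣ b ∨ b ∣ a := by
  rcases (iff_dvd.mp ht).2 c with ⟨e, rfl⟩ | ⟨d, rfl⟩
  · have hc0 : c ≠ 0 := left_ne_zero_of_mul ht.1
    exact Or.inr ⟨e, mul_left_cancel₀ hc0 (by linear_combination -h)⟩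
  · exact Or.inl ⟨d, mul_left_cancel₀ ht.1 (by linear_combination h)⟩

end IsComparable

theorem PreValuationRing.of_isLocalization_of_isComparable {D S : Type*} [CommRing D]
    [IsDomain D] [CommSemiring S] [Algebra D S] (M : Submonoid D) [IsLocalization M S]
    [PreValuationRing S] (hM : ∀ s ∈ M, IsComparable s) : PreValuationRing D := by
  refine PreValuationRing.iff_dvd_total.mpr ⟨fun a b => ?_⟩
  rcases ValuationRing.dvd_total (algebraMap D S a) (algebraMap D S b) with h | h
  · obtain ⟨t, htM, c, htc⟩ := IsLocalization.exists_mul_eq_mul_of_algebraMap_dvd M h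
    exact (hM t htM).dvd_or_dvd_of_mul_eq_mul htc
  · obtain ⟨t, htM, c, htc⟩ := IsLocalization.exists_mul_eq_mul_of_algebraMap_dvd M h
    exact ((hM t htM).dvd_or_dvd_of_mul_eq_mul htc).symm

section PowerIntersection

variable {D : Type*} [CommRing D] {x : D}

theorem mem_iInf_span_pow_iff {a : D} :
    a ∈ ⨅ n : ℕ, Ideal.span {x ^ n} ↔ ∀ n : ℕ, x ^ n ∣ a := by
  simp only [Ideal.mem_iInf, Ideal.mem_span_singleton]

variable [IsDomain D]

theorem IsComparable.exists_dvd_pow_of_notMem_iInf (hx : IsComparable x) {a : D}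
    (ha : a ∉ ⨅ n : ℕ, Ideal.span {x ^ n}) : ∃ n, a ∣ x ^ n := by
  obtain ⟨n, hn⟩ := not_forall.mp (mt mem_iInf_span_pow_iff.mpr ha)
  exact ⟨n, ((IsComparable.iff_dvd.mp (hx.pow n)).2 a).resolve_right hn⟩

theorem IsComparable.of_notMem_iInf (hx : IsComparable x) {a : D}
    (ha : a ∉ ⨅ n : ℕ, Ideal.span {x ^ n}) : IsComparable a :=
  let ⟨n, hn⟩ := hx.exists_dvd_pow_of_notMem_iInf ha
  (hx.pow n).of_dvd_s12 hn

theorem IsComparable.isPrime_iInf (hx : IsComparable x) (hxu : ¬ IsUnit x) :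
    (⨅ n : ℕ, Ideal.span {x ^ n}).IsPrime := by
  refine Ideal.isPrime_iff.mpr ⟨fun h => hxu (isUnit_of_dvd_one ?_), fun {a b} hab => ?_⟩
  · simpa using mem_iInf_span_pow_iff.mp (h ▸ Submodule.mem_top : (1 : D) ∈ _) 1
  by_contra! hnot
  obtain ⟨n, hn⟩ := hx.exists_dvd_pow_of_notMem_iInf hnot.1
  obtain ⟨m, hm⟩ := hx.exists_dvd_pow_of_notMem_iInf hnot.2
  -- `x ^ (n + m + 1) ∣ a * b ∣ x ^ (n + m)` is impossible for a nonzero nonunit `x`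
  have hdvd : x ^ (n + m + 1) ∣ x ^ (n + m) :=
    (mem_iInf_span_pow_iff.mp hab _).trans (pow_add x n m ▸ mul_dvd_mul hn hm)
  have := (pow_dvd_pow_iff hx.1 hxu).mp hdvd
  omega

end PowerIntersection

/-- Suppose an integral domain `D` contains a nonzero nonunit comparable element `x`,
and let `Q := ⋂_{n ≥ 0} xⁿD`. Then `Q` is a prime ideal of `D`, and `D` is a valuation
domain if and only if the localization `D_Q` is a valuation domain. -/
theorem valuationRing_iff_localization_at_powers (D : Type*) [CommRing D] [IsDomain D]
    (x : D) (hx : IsComparable x) (hxu : ¬ IsUnit x)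
    (Q : Ideal D) (hQ : Q = ⨅ n : ℕ, Ideal.span {x ^ n}) :
    ∃ hp : Q.IsPrime,
      (ValuationRing D ↔ (letI := hp; ValuationRing (Localization.AtPrime Q))) := by
  have hp : Q.IsPrime := hQ ▸ hx.isPrime_iInf hxu
  refine ⟨hp, fun _ => ?_, fun _ => ?_⟩
  · have := PreValuationRing.of_isLocalization (S := Localization.AtPrime Q) Q.primeCompl
    exact ValuationRing.mk
  · have := PreValuationRing.of_isLocalization_of_isComparable (S := Localization.AtPrime Q)
      Q.primeCompl fun _ hs => hx.of_notMem_iInf (hQ ▸ hs)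
    exact ValuationRing.mk
end

section
/- For an integral domain D the following are equivalent: (i) D is a valuation domain; (ii) D is an integrally closed coherent t-local domain; (iii) D is an integrally closed finite conductor t-local domain. -/
open scoped nonZeroDivisors

/-- An integral domain is `t`-local if it is local and its maximal ideal is a `t`-ideal. -/
def IsTLocal (A : Type*) [CommRing A] [IsDomain A] : Prop :=
  ∃ h : IsLocalRing A, Ideal.IsT (@IsLocalRing.maximalIdeal A _ h)

/-! A valuation domain is Bézout, so a finitely generated fractional ideal `F` is principal and
`F^v = F`: every ideal is a `t`-ideal, and coherence follows from the ideals being totally ordered.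

Conversely, let `I = (a, b)` with `a, b ≠ 0`. Then `I⁻¹ = (ab)⁻¹((a) ∩ (b))` is finitely generated
by the finite conductor property, so every `x ∈ (II⁻¹)⁻¹` stabilizes the finitely generated
module `I⁻¹`, is integral over `D`, and lies in `D`; thus `(II⁻¹)^v = D`. Since `II⁻¹` is finitely
generated and the maximal ideal is a `t`-ideal, `II⁻¹` is not contained in it, so `II⁻¹ = D`.
An invertible ideal of a local domain is principal, so `D` is a local Bézout domain, that is,
a valuation domain. -/

open FractionalIdeal

namespace FractionalIdeal

variable {D K : Type*} [CommRing D] [IsDomain D] [Field K] [Algebra D K] [IsFractionRing D K]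

theorem isPrincipal_of_fg [IsBezout D] {I : FractionalIdeal D⁰ (FractionRing D)}
    (hI : (I : Submodule D (FractionRing D)).FG) :
    (I : Submodule D (FractionRing D)).IsPrincipal := by
  refine isPrincipal_of_isPrincipal_num I (IsBezout.isPrincipal_of_FG _ ?_)
  have : Module.Finite D I := Module.Finite.iff_fg.mpr hI
  exact Module.Finite.iff_fg.mp (Module.Finite.equiv (equivNumOfIsLocalization I))

theorem inv_inv_of_isPrincipal {I : FractionalIdeal D⁰ K} [(I : Submodule D K).IsPrincipal]
    (hI : I ≠ 0) : I⁻¹⁻¹ = I :=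
  (right_inverse_eq K I⁻¹ I (by rw [mul_comm]; exact invertible_of_principal K I hI)).symm

theorem one_le_inv_of_le_one {I : FractionalIdeal D⁰ K} (hI : I ≠ 0) (hI1 : I ≤ 1) :
    1 ≤ I⁻¹ := by
  simpa using inv_anti_mono hI one_ne_zero hI1

omit [IsDomain D] in
theorem mul_mem_spanSingleton_self_iff {x : K} (hx : x ≠ 0) {y : K} :
    x * y ∈ spanSingleton D⁰ x ↔ y ∈ (1 : FractionalIdeal D⁰ K) := by
  rw [← mul_one (spanSingleton D⁰ x), mem_singleton_mul]
  constructor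
  · rintro ⟨z, hz, hxz⟩
    rwa [mul_left_cancel₀ hx hxz]
  · exact fun hy => ⟨y, hy, rfl⟩

theorem mem_inv_spanSingleton_sup_spanSingleton {x y : K} (hx : x ≠ 0) {z : K} :
    z ∈ (spanSingleton D⁰ x ⊔ spanSingleton D⁰ y)⁻¹ ↔
      z * x ∈ (1 : FractionalIdeal D⁰ K) ∧ z * y ∈ (1 : FractionalIdeal D⁰ K) := by
  have hI : spanSingleton D⁰ x ⊔ spanSingleton D⁰ y ≠ 0 :=
    ne_bot_of_le_ne_bot ((spanSingleton_eq_zero_iff).not.mpr hx) le_sup_left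
  rw [← spanSingleton_le_iff_mem, inv_eq, le_div_iff_mul_le hI, sup_eq_add, mul_add,
    spanSingleton_mul_spanSingleton, spanSingleton_mul_spanSingleton, ← sup_eq_add, sup_le_iff,
    spanSingleton_le_iff_mem, spanSingleton_le_iff_mem]

omit [IsDomain D] in
theorem coeIdeal_span_pair (a b : D) :
    ((Ideal.span {a, b} : Ideal D) : FractionalIdeal D⁰ K) =
      spanSingleton D⁰ (algebraMap D K a) ⊔ spanSingleton D⁰ (algebraMap D K b) := by
  rw [Ideal.span_insert, coeIdeal_sup, coeIdeal_span_singleton, coeIdeal_span_singleton,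
    sup_eq_add]

theorem inv_coeIdeal_span_pair {a b : D} (ha : a ≠ 0) (hb : b ≠ 0) :
    ((Ideal.span {a, b} : Ideal D) : FractionalIdeal D⁰ K)⁻¹ =
      spanSingleton D⁰ (algebraMap D K a * algebraMap D K b)⁻¹ *
        ((Ideal.span {a} ⊓ Ideal.span {b} : Ideal D) : FractionalIdeal D⁰ K) := by
  set c := algebraMap D K a * algebraMap D K b
  have hfa : algebraMap D K a ≠ 0 := by simpa using ha
  have hfb : algebraMap D K b ≠ 0 := by simpa using hb
  have hc : c ≠ 0 := mul_ne_zero hfa hfb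
  have key : ∀ z, z ∈ ((Ideal.span {a, b} : Ideal D) : FractionalIdeal D⁰ K)⁻¹ ↔
      c * z ∈ ((Ideal.span {a} ⊓ Ideal.span {b} : Ideal D) : FractionalIdeal D⁰ K) := by
    intro z
    have hca : c * z = algebraMap D K a * (z * algebraMap D K b) := by ring
    have hcb : c * z = algebraMap D K b * (z * algebraMap D K a) := by ring
    rw [coeIdeal_span_pair, mem_inv_spanSingleton_sup_spanSingleton hfa, coeIdeal_inf,
      coeIdeal_span_singleton, coeIdeal_span_singleton]
    change _ ↔ c * z ∈ spanSingleton D⁰ _ ∧ c * z ∈ spanSingleton D⁰ _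
    nth_rewrite 1 [hca]
    rw [hcb, mul_mem_spanSingleton_self_iff hfa, mul_mem_spanSingleton_self_iff hfb, and_comm]
  refine eq_spanSingleton_mul.mpr ⟨fun z hz => ⟨c * z, (key z).mp hz, ?_⟩, fun w hw => ?_⟩
  · rw [← mul_assoc, inv_mul_cancel₀ hc, one_mul]
  · rwa [key, ← mul_assoc, mul_inv_cancel₀ hc, one_mul]

theorem fg_inv_coeIdeal_span_pair {a b : D} (ha : a ≠ 0) (hb : b ≠ 0)
    (hab : (Ideal.span {a} ⊓ Ideal.span {b}).FG) :
    (↑((Ideal.span {a, b} : Ideal D) : FractionalIdeal D⁰ K)⁻¹ : Submodule D K).FG := by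
  rw [inv_coeIdeal_span_pair ha hb, coe_mul, coe_spanSingleton, coe_coeIdeal]
  exact (Submodule.fg_span_singleton _).mul (Submodule.FG.map _ hab)

theorem mul_inv_inv_eq_one [IsIntegrallyClosed D] {I : FractionalIdeal D⁰ K} (hI : I ≠ 0)
    (hfg : (↑I⁻¹ : Submodule D K).FG) : (I * I⁻¹)⁻¹ = 1 := by
  have hII : I * I⁻¹ ≠ 0 := (bot_lt_mul_inv hI).ne'
  have hI' : (↑I⁻¹ : Submodule D K) ≠ ⊥ :=
    coeToSubmodule_eq_bot.not.mpr fun h => hII (by rw [h, mul_zero])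
  refine le_antisymm (fun x hx => ?_) (one_le_inv_of_le_one hII mul_one_div_le_one)
  have hstable : ∀ y ∈ (↑I⁻¹ : Submodule D K), x • y ∈ (↑I⁻¹ : Submodule D K) := by
    intro y hy
    rw [mem_coe] at hy ⊢
    rw [mem_inv_iff hI]
    intro w hw
    rw [smul_eq_mul, mul_assoc]
    exact (mem_inv_iff hII).mp hx _ (mul_comm w y ▸ mul_mem_mul hw hy)
  obtain ⟨r, hr⟩ := IsIntegrallyClosed.isIntegral_iff.mp
    (isIntegral_of_smul_mem_submodule _ hI' hfg x hstable)
  exact (mem_one_iff _).mpr ⟨r, hr⟩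

theorem isPrincipal_of_mul_inv_eq_one [IsLocalRing D] {I : FractionalIdeal D⁰ K}
    (h : I * I⁻¹ = 1) : (I : Submodule D K).IsPrincipal :=
  isPrincipal.of_finite_maximals_of_inv le_rfl
    ((Set.finite_singleton _).subset fun _ hM => IsLocalRing.eq_maximalIdeal hM) I I⁻¹ h

end FractionalIdeal

section TClosure

variable {D : Type*} [CommRing D] [IsDomain D]

theorem inv_inv_le_tClos {E F : FractionalIdeal D⁰ (FractionRing D)} (hF0 : F ≠ 0)
    (hFE : F ≤ E)
    (hFG : (F : Submodule D (FractionRing D)).FG) :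
    (↑F⁻¹⁻¹ : Submodule D (FractionRing D)) ≤ tClos D E :=
  le_iSup₂_of_le F ⟨hF0, hFE, hFG⟩ le_rfl

theorem tClos_eq_of_isBezout [IsBezout D] (E : FractionalIdeal D⁰ (FractionRing D)) :
    tClos D E = E := by
  refine le_antisymm (iSup₂_le fun F ⟨hF0, hFE, hFG⟩ => ?_) (le_tClos E)
  have := isPrincipal_of_fg hFG
  rw [inv_inv_of_isPrincipal hF0]
  exact coe_le_coe.mpr hFE

theorem isTLocal_of_valuationRing [ValuationRing D] : IsTLocal D :=
  ⟨inferInstance, (tClos_eq_of_isBezout _).symm⟩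

theorem IsTLocal.eq_one_of_inv_eq_one (hD : IsTLocal D)
    {J : FractionalIdeal D⁰ (FractionRing D)} (hJ0 : J ≠ 0) (hJ1 : J ≤ 1)
    (hJfg : (J : Submodule D (FractionRing D)).FG) (hJv : J⁻¹ = 1) : J = 1 := by
  obtain ⟨_, hT⟩ := hD
  obtain ⟨J, rfl⟩ := le_one_iff_exists_coeIdeal.mp hJ1
  by_contra hne
  have hJM : (J : FractionalIdeal D⁰ (FractionRing D)) ≤ (IsLocalRing.maximalIdeal D :) :=
    (coeIdeal_le_coeIdeal _).mpr
      (IsLocalRing.le_maximalIdeal fun h => hne (by rw [h, coeIdeal_top]))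
  have h1M : (1 : FractionalIdeal D⁰ (FractionRing D)) ≤ (IsLocalRing.maximalIdeal D :) := by
    have := inv_inv_le_tClos hJ0 hJM hJfg
    rwa [hJv, inv_one, ← hT, coe_le_coe] at this
  rw [← coeIdeal_top, coeIdeal_le_coeIdeal] at h1M
  exact (IsLocalRing.maximalIdeal.isMaximal D).ne_top (top_le_iff.mp h1M)

theorem IsTLocal.mul_inv_eq_one [IsIntegrallyClosed D] (hD : IsTLocal D)
    {I : FractionalIdeal D⁰ (FractionRing D)} (hI : I ≠ 0)
    (hIfg : (I : Submodule D (FractionRing D)).FG)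
    (hIinv : (↑I⁻¹ : Submodule D (FractionRing D)).FG) : I * I⁻¹ = 1 :=
  hD.eq_one_of_inv_eq_one (bot_lt_mul_inv hI).ne' mul_one_div_le_one
    (by rw [coe_mul]; exact hIfg.mul hIinv) (mul_inv_inv_eq_one hI hIinv)

theorem IsTLocal.isBezout [IsIntegrallyClosed D] (hD : IsTLocal D)
    (hFC : ∀ a b : D, (Ideal.span {a} ⊓ Ideal.span {b}).FG) : IsBezout D := by
  have := hD.1
  refine IsBezout.iff_span_pair_isPrincipal.mpr fun a b => ?_
  rcases eq_or_ne a 0 with rfl | ha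
  · rw [Ideal.span_insert_zero]; exact ⟨⟨b, rfl⟩⟩
  rcases eq_or_ne b 0 with rfl | hb
  · rw [Set.pair_comm, Ideal.span_insert_zero]; exact ⟨⟨a, rfl⟩⟩
  have hI0 : ((Ideal.span {a, b} : Ideal D) : FractionalIdeal D⁰ (FractionRing D)) ≠ 0 :=
    coeIdeal_ne_zero.mpr (mt Ideal.span_eq_bot.mp (by simp [ha]))
  have hIfg : (((Ideal.span {a, b} : Ideal D) : FractionalIdeal D⁰ (FractionRing D)) :
      Submodule D (FractionRing D)).FG :=
    (coeIdeal_fg _ (IsFractionRing.injective D _) _).mpr (Submodule.fg_span (Set.toFinite _))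
  rw [← IsFractionRing.coeSubmodule_isPrincipal (R := D) (K := FractionRing D), ← coe_coeIdeal]
  exact isPrincipal_of_mul_inv_eq_one
    (hD.mul_inv_eq_one hI0 hIfg (fg_inv_coeIdeal_span_pair ha hb (hFC a b)))

end TClosure

/-- For an integral domain `D` the following are equivalent:
(i) `D` is a valuation domain;
(ii) `D` is an integrally closed coherent `t`-local domain (coherent: the intersection
of any two finitely generated ideals is finitely generated);
(iii) `D` is an integrally closed finite conductor `t`-local domain (finite conductor:
the intersection of any two principal ideals is finitely generated). -/
theorem valuation_iff_integrally_closed_coherent_t_local (D : Type*) [CommRing D]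
    [IsDomain D] :
    List.TFAE
      [ ValuationRing D,
        IsIntegrallyClosed D ∧
          (∀ I J : Ideal D, I.FG → J.FG → (I ⊓ J).FG) ∧ IsTLocal D,
        IsIntegrallyClosed D ∧
          (∀ a b : D, (Ideal.span {a} ⊓ Ideal.span {b}).FG) ∧ IsTLocal D ] := by
  tfae_have 1 → 2 := fun _ => by
    refine ⟨inferInstance, fun I J hI hJ => ?_, isTLocal_of_valuationRing⟩
    rcases (ValuationRing.le_total_ideal (A := D)).total I J with h | h
    · rwa [inf_eq_left.mpr h]
    · rwa [inf_eq_right.mpr h]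
  tfae_have 2 → 3 := fun ⟨hIC, hCoh, hT⟩ =>
    ⟨hIC, fun a b => hCoh _ _ (Submodule.fg_span_singleton a) (Submodule.fg_span_singleton b),
      hT⟩
  tfae_have 3 → 1 := fun ⟨_, hFC, hT⟩ =>
    ValuationRing.iff_local_bezout_domain.mpr ⟨hT.1, hT.isBezout hFC⟩
  tfae_finish
end
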